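/- arXiv:1611.06861 — 2 statements merged into one kernel-verified Lean document; each statement's English description precedes it below -/
import Mathlib

section
/- If f: S → ℂ is a nonzero solution of μ(y)f(xτ(y)z₀) − f(xyz₀) = 2f(x)f(y), then the function g(x) := f(xz₀)/f(z₀) satisfies the μ-d'Alembert equation g(xy) + μ(y)g(xτ(y)) = 2g(x)g(y), and the pair (f, g) satisfies the sine addition law f(xy) = f(x)g(y) + f(y)g(x) for all x,y ∈ S. -/
/-!
Write `N = f z₀`. Comparing the equation at `(x z₀, y)`, `(x, y z₀)` and `(x τ(y), z₀)` gives
`f(x) f(y z₀) = f(x z₀) f(y) + N μ(y) f(x τ(y))`, and comparing it at `(a, y)` and `(a, τ(y))` with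
`f(a) ≠ 0` gives `μ(y) f(τ(y)) = -f(y)`. If `N = 0`, the first identity makes `f(· z₀)` a multiple
`c f` of `f`; the equation at `(z₀, x)` then reads `c² (μ(x) f(τ(x)) - f(x)) = 0`, so `c = 0` by
oddness, and then `f = 0`. Hence `N ≠ 0`; evaluating the identities at `z₀` and `τ(z₀)` gives
`f(z₀²) = 0` and then `f(x z₀²) = -N f(x)`. With this, the equation at `(x z₀, y)` is the sine
addition law for `g = f(· z₀) / N` and the equation at `(x, y)` is d'Alembert's equation for `g`.
-/

section Central

variable {S : Type*} [Semigroup S] {τ : S → S} {z : S}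

lemma mul_right_comm_of_central (hz : ∀ x, z * x = x * z) (u v : S) : u * z * v = u * v * z := by
  rw [mul_assoc, hz, ← mul_assoc]

lemma central_of_involution (hτinv : ∀ x, τ (τ x) = x)
    (hτ : (∀ x y, τ (x * y) = τ x * τ y) ∨ (∀ x y, τ (x * y) = τ y * τ x))
    (hz : ∀ x, z * x = x * z) (x : S) : τ z * x = x * τ z := by
  rw [← hτinv x]
  rcases hτ with h | h
  · rw [← h, hz, h]
  · rw [← h, ← hz, h]

lemma involution_mul_central (hτinv : ∀ x, τ (τ x) = x)
    (hτ : (∀ x y, τ (x * y) = τ x * τ y) ∨ (∀ x y, τ (x * y) = τ y * τ x))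
    (hz : ∀ x, z * x = x * z) (y : S) : τ (y * z) = τ y * τ z := by
  rcases hτ with h | h
  · exact h y z
  · rw [h y z, central_of_involution hτinv (.inr h) hz]

end Central

section FunctionalEquation

variable {S : Type*} [Semigroup S] {K : Type*} [Field K] {τ : S → S} {μ : S → K} {z₀ : S}
  {f : S → K}

lemma apply_mul_central_mul_apply_mul_central (hz₀ : ∀ x, z₀ * x = x * z₀)
    (hf : ∀ x y, μ y * f (x * τ y * z₀) - f (x * y * z₀) = 2 * f x * f y)
    (hkey : ∀ x y, f x * f (y * z₀) = f (x * z₀) * f y + f z₀ * (μ y * f (x * τ y))) (x y : S) :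
    f (x * z₀) * f (y * z₀) =
      f (x * z₀ * z₀) * f y + f z₀ * f (x * y * z₀) + 2 * f z₀ * (f x * f y) := by
  have h := hkey (x * z₀) y
  rw [mul_right_comm_of_central hz₀ x (τ y)] at h
  linear_combination h + f z₀ * hf x y

lemma sine_addition_of_apply_mul_central_mul_central (hz₀ : ∀ x, z₀ * x = x * z₀)
    (hf : ∀ x y, μ y * f (x * τ y * z₀) - f (x * y * z₀) = 2 * f x * f y)
    (hkey : ∀ x y, f x * f (y * z₀) = f (x * z₀) * f y + f z₀ * (μ y * f (x * τ y)))
    (hN : f z₀ ≠ 0) (hsq : ∀ x, f (x * z₀ * z₀) = -(f z₀ * f x)) (x y : S) :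
    f (x * y) = f x * (f (y * z₀) / f z₀) + f y * (f (x * z₀) / f z₀) := by
  have h := hf (x * z₀) y
  rw [mul_right_comm_of_central hz₀ x (τ y), mul_right_comm_of_central hz₀ x y, hsq, hsq] at h
  field_simp
  linear_combination h - hkey x y

lemma dAlembert_of_apply_mul_central_mul_central (hz₀ : ∀ x, z₀ * x = x * z₀)
    (hf : ∀ x y, μ y * f (x * τ y * z₀) - f (x * y * z₀) = 2 * f x * f y)
    (hkey : ∀ x y, f x * f (y * z₀) = f (x * z₀) * f y + f z₀ * (μ y * f (x * τ y)))
    (hN : f z₀ ≠ 0) (hsq : ∀ x, f (x * z₀ * z₀) = -(f z₀ * f x)) (x y : S) :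
    f (x * y * z₀) / f z₀ + μ y * (f (x * τ y * z₀) / f z₀) =
      2 * (f (x * z₀) / f z₀) * (f (y * z₀) / f z₀) := by
  have h := apply_mul_central_mul_apply_mul_central hz₀ hf hkey x y
  rw [hsq] at h
  field_simp
  linear_combination f z₀ * hf x y - 2 * h

variable [CharZero K]

lemma mu_mul_apply_involution (hτinv : ∀ x, τ (τ x) = x) (hμτ : ∀ y, μ y * μ (τ y) = 1)
    (hf : ∀ x y, μ y * f (x * τ y * z₀) - f (x * y * z₀) = 2 * f x * f y) (hf0 : f ≠ 0) (y : S) :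
    μ y * f (τ y) = -f y := by
  obtain ⟨a, ha⟩ := Function.ne_iff.mp hf0
  have h := hf a (τ y)
  rw [hτinv] at h
  have key : f a * (f y + μ y * f (τ y)) = 0 := by
    linear_combination (-(μ y * h) - hf a y + f (a * y * z₀) * hμτ y) / 2
  linear_combination (mul_eq_zero.mp key).resolve_left ha

lemma apply_mul_apply_mul_central (hτinv : ∀ x, τ (τ x) = x)
    (hτ : (∀ x y, τ (x * y) = τ x * τ y) ∨ (∀ x y, τ (x * y) = τ y * τ x))
    (hμ : ∀ x y, μ (x * y) = μ x * μ y) (hz₀ : ∀ x, z₀ * x = x * z₀)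
    (hf : ∀ x y, μ y * f (x * τ y * z₀) - f (x * y * z₀) = 2 * f x * f y) (x y : S) :
    f x * f (y * z₀) = f (x * z₀) * f y + f z₀ * (μ y * f (x * τ y)) := by
  have h₁ := hf (x * z₀) y
  rw [mul_right_comm_of_central hz₀ x (τ y), mul_right_comm_of_central hz₀ x y] at h₁
  have h₂ := hf x (y * z₀)
  rw [involution_mul_central hτinv hτ hz₀, hμ, ← mul_assoc, ← mul_assoc] at h₂
  linear_combination (μ y * hf (x * τ y) z₀ + h₁ - h₂) / 2

lemma apply_central_ne_zero (hz₀ : ∀ x, z₀ * x = x * z₀)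
    (hf : ∀ x y, μ y * f (x * τ y * z₀) - f (x * y * z₀) = 2 * f x * f y) (hf0 : f ≠ 0)
    (hodd : ∀ y, μ y * f (τ y) = -f y)
    (hkey : ∀ x y, f x * f (y * z₀) = f (x * z₀) * f y + f z₀ * (μ y * f (x * τ y))) :
    f z₀ ≠ 0 := by
  intro hN
  obtain ⟨a, ha⟩ := Function.ne_iff.mp hf0
  set c := f (a * z₀) / f a
  have hc (y : S) : f (y * z₀) = c * f y := by
    have h := hkey a y
    rw [hN, zero_mul, add_zero] at h
    rw [div_mul_eq_mul_div, eq_div_iff ha]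
    linear_combination h
  have hc₂ (x : S) : c ^ 2 * f x = 0 := by
    have h := hf z₀ x
    rw [hz₀, hz₀, hc, hc, hc, hc, hN] at h
    linear_combination (c ^ 2 * hodd x - h) / 2
  have hc₀ : c = 0 := pow_eq_zero_iff two_ne_zero |>.mp ((mul_eq_zero.mp (hc₂ a)).resolve_right ha)
  have h := hf a a
  rw [hc, hc, hc₀] at h
  exact ha (mul_self_eq_zero.mp (by linear_combination -h / 2))

lemma apply_central_mul_central_eq_zero (hz₀ : ∀ x, z₀ * x = x * z₀)
    (hf : ∀ x y, μ y * f (x * τ y * z₀) - f (x * y * z₀) = 2 * f x * f y)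
    (hμz₀ : μ z₀ ≠ 0) (hodd : ∀ y, μ y * f (τ y) = -f y)
    (hkey : ∀ x y, f x * f (y * z₀) = f (x * z₀) * f y + f z₀ * (μ y * f (x * τ y)))
    (hN : f z₀ ≠ 0) : f (z₀ * z₀) = 0 := by
  have hprod := apply_mul_central_mul_apply_mul_central hz₀ hf hkey
  have h₁ : f (τ z₀ * z₀) = 0 := by
    have h := hkey z₀ z₀
    rw [hz₀ (τ z₀)] at h
    have : f z₀ * μ z₀ * f (τ z₀ * z₀) = 0 := by linear_combination -h
    simpa [hN, hμz₀] using this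
  have h₂ : f (τ z₀ * z₀ * z₀) = -(f z₀ * f (τ z₀)) := by
    have h := hprod (τ z₀) z₀
    rw [h₁] at h
    have : 2 * f z₀ * (f (τ z₀ * z₀ * z₀) + f z₀ * f (τ z₀)) = 0 := by linear_combination -h
    linear_combination (mul_eq_zero.mp this).resolve_left (by simpa using hN)
  have h₃ : f (z₀ * z₀ * z₀) = -(f z₀ * f z₀) := by
    have h := hf z₀ z₀
    rw [hz₀ (τ z₀), h₂] at h
    linear_combination -h - f z₀ * hodd z₀
  exact mul_self_eq_zero.mp (by linear_combination hprod z₀ z₀ + 2 * f z₀ * h₃)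

lemma apply_mul_central_mul_central (hz₀ : ∀ x, z₀ * x = x * z₀)
    (hf : ∀ x y, μ y * f (x * τ y * z₀) - f (x * y * z₀) = 2 * f x * f y)
    (hkey : ∀ x y, f x * f (y * z₀) = f (x * z₀) * f y + f z₀ * (μ y * f (x * τ y)))
    (hN : f z₀ ≠ 0) (hsq : f (z₀ * z₀) = 0) (x : S) : f (x * z₀ * z₀) = -(f z₀ * f x) := by
  have h := apply_mul_central_mul_apply_mul_central hz₀ hf hkey x z₀
  rw [hsq] at h
  have : 2 * f z₀ * (f (x * z₀ * z₀) + f z₀ * f x) = 0 := by linear_combination -h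
  linear_combination (mul_eq_zero.mp this).resolve_left (by simpa using hN)

end FunctionalEquation

theorem stmt_13 {S : Type*} [Semigroup S] (τ : S → S)
    (hτinv : ∀ x, τ (τ x) = x)
    (hτ : (∀ x y, τ (x * y) = τ x * τ y) ∨ (∀ x y, τ (x * y) = τ y * τ x))
    (μ : S → ℂ) (hμ : ∀ x y, μ (x * y) = μ x * μ y)
    (hμτ : ∀ x, μ (x * τ x) = 1)
    (z₀ : S) (hz₀ : ∀ x, z₀ * x = x * z₀)
    (f : S → ℂ) (hf0 : f ≠ 0) (hf : ∀ x y, μ y * f (x * τ y * z₀) - f (x * y * z₀) = 2 * f x * f y) :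
    (∀ x y, (fun x => f (x * z₀) / f z₀) (x * y) + μ y * (fun x => f (x * z₀) / f z₀) (x * τ y) =
      2 * (fun x => f (x * z₀) / f z₀) x * (fun x => f (x * z₀) / f z₀) y) ∧
    (∀ x y, f (x * y) = f x * (fun x => f (x * z₀) / f z₀) y +
      f y * (fun x => f (x * z₀) / f z₀) x) := by
  have hμτ' (y : S) : μ y * μ (τ y) = 1 := by rw [← hμ, hμτ]
  have hodd := mu_mul_apply_involution hτinv hμτ' hf hf0
  have hkey := apply_mul_apply_mul_central hτinv hτ hμ hz₀ hf
  have hN := apply_central_ne_zero hz₀ hf hf0 hodd hkey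
  have hμz₀ : μ z₀ ≠ 0 := left_ne_zero_of_mul_eq_one (hμτ' z₀)
  have hsq := apply_mul_central_mul_central hz₀ hf hkey hN
    (apply_central_mul_central_eq_zero hz₀ hf hμz₀ hodd hkey hN)
  exact ⟨dAlembert_of_apply_mul_central_mul_central hz₀ hf hkey hN hsq,
    sine_addition_of_apply_mul_central_mul_central hz₀ hf hkey hN hsq⟩
end

section
/- The nonzero solutions f: S → ℂ of μ(y)f(τ(y)xz₀) − f(xyz₀) = 2f(x)f(y) are exactly the functions f = χ(z₀)·(μ·χ∘τ − χ)/2 where χ: S → ℂ is multiplicative with χ(z₀) ≠ 0 and μ(z₀)χ(τ(z₀)) = −χ(z₀). -/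
/-!
Comparing the equation at `(x, y z₀)`, `(τ(y) x, z₀)` and `(x z₀, y)` gives
`f(z₀) μ(y) f(τ(y) x) = f(x) f(y z₀) - f(x z₀) f(y)`.
This excludes `f(· z₀)` being proportional to `f`: if `f(z₀) ≠ 0`, `f` would vanish on products;
if `f(z₀) = 0`, `f` would solve the same equation without `z₀`, which forces `μ · f ∘ τ = -f`,
whereas `y = z₀` gives `μ · f ∘ τ = f`. Hence `a = f(z₀) ≠ 0` and `f(z₀²) = 0`, and then
`a f(x y) = f(x) f(y z₀) + f(x z₀) f(y)` and `a f(x y z₀) = f(x z₀) f(y z₀) - a f(x) f(y)`: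
with `c² = -a`, the function `(f(· z₀) + c f) / a` is multiplicative.
-/

def IsVanVleckSolution {S : Type*} [Mul S] (τ : S → S) (μ : S → ℂ) (z₀ : S) (f : S → ℂ) :
    Prop :=
  ∀ x y, μ y * f (τ y * x * z₀) - f (x * y * z₀) = 2 * f x * f y

section Involution

variable {S : Type*} [Mul S] {τ : S → S}

theorem map_mul_central_eq
    (hτ : (∀ x y, τ (x * y) = τ x * τ y) ∨ (∀ x y, τ (x * y) = τ y * τ x))
    {z₀ : S} (hz₀ : ∀ x, z₀ * x = x * z₀) (y : S) : τ (y * z₀) = τ z₀ * τ y := by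
  rcases hτ with hhom | hanti
  · rw [← hz₀, hhom]
  · exact hanti y z₀

theorem map_mul_comp_of_hom_or_anti
    (hτ : (∀ x y, τ (x * y) = τ x * τ y) ∨ (∀ x y, τ (x * y) = τ y * τ x))
    {χ : S → ℂ} (hχ : ∀ x y, χ (x * y) = χ x * χ y) (x y : S) :
    χ (τ (x * y)) = χ (τ x) * χ (τ y) := by
  rcases hτ with h | h <;> rw [h, hχ]
  exact mul_comm _ _

theorem twist_apply_eq_neg_of_twisted_sine (hτinv : ∀ x, τ (τ x) = x) {μ : S → ℂ}
    (hμτ : ∀ x, μ x * μ (τ x) = 1) {g : S → ℂ} {c : ℂ} (hc : c ≠ 0)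
    (hg : ∀ x y, μ y * g (τ y * x) = g (x * y) + c * g x * g y) (x : S) :
    μ x * g (τ x) = -g x := by
  have h₁ := hg (τ x) (τ x)
  have h₂ := hg x (τ x)
  rw [hτinv] at h₁ h₂
  have hsq : c * (g x + μ x * g (τ x)) ^ 2 = 0 := by
    linear_combination -(μ x * hg (τ x) x) - hg x x - μ x ^ 2 * (μ (τ x) * h₂ + h₁) +
      (g (x * x) * (μ x * μ (τ x) + 1) - c * μ x * g x * g (τ x)) * hμτ x
  have := pow_eq_zero_iff two_ne_zero |>.mp ((mul_eq_zero.mp hsq).resolve_left hc)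
  linear_combination this

end Involution

namespace IsVanVleckSolution

variable {S : Type*} [Semigroup S] {τ : S → S} {μ : S → ℂ} {z₀ : S} {f : S → ℂ}
  (hf : IsVanVleckSolution τ μ z₀ f)
include hf

theorem eq_zero_of_forall_apply_mul_eq_zero (h : ∀ x y, f (x * y) = 0) : f = 0 := by
  funext x
  have hx := hf x x
  rw [h, h] at hx
  exact mul_self_eq_zero.mp (by linear_combination -hx / 2)

variable (hμ : ∀ x y, μ (x * y) = μ x * μ y) (hz₀ : ∀ x, z₀ * x = x * z₀)
  (hτz : ∀ y, τ (y * z₀) = τ z₀ * τ y)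
include hμ hz₀ hτz

theorem apply_center_mul_twist_apply_mul (x y : S) :
    f z₀ * (μ y * f (τ y * x)) = f x * f (y * z₀) - f (x * z₀) * f y := by
  have h₁ := hf x (y * z₀)
  have h₂ := hf (τ y * x) z₀
  have h₃ := hf (x * z₀) y
  rw [hτz, hμ, ← mul_assoc x y z₀, mul_assoc (τ z₀)] at h₁
  rw [mul_assoc x z₀ y, hz₀ y, ← mul_assoc x y z₀, ← mul_assoc (τ y) x z₀] at h₃
  linear_combination (h₁ - μ y * h₂ - h₃) / 2

theorem mul_center_identity (x y : S) :
    f z₀ * f (x * y * z₀) + 2 * (f z₀ * f x * f y) =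
      f (x * z₀) * f (y * z₀) - f (x * z₀ * z₀) * f y := by
  have h := hf.apply_center_mul_twist_apply_mul hμ hz₀ hτz (x * z₀) y
  rw [← mul_assoc (τ y) x z₀] at h
  linear_combination h - f z₀ * hf x y

section Normalized

variable (ha : f z₀ ≠ 0) (hb : f (z₀ * z₀) = 0)
include ha hb

theorem apply_mul_center_mul_center (x : S) : f (x * z₀ * z₀) = -(f z₀ * f x) := by
  have h := hf.mul_center_identity hμ hz₀ hτz x z₀
  rw [hb] at h
  have h' : f z₀ * (f (x * z₀ * z₀) + f z₀ * f x) = 0 := by linear_combination h / 2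
  linear_combination (mul_eq_zero.mp h').resolve_left ha

theorem apply_mul_mul_center (x y : S) :
    f z₀ * f (x * y * z₀) = f (x * z₀) * f (y * z₀) - f z₀ * f x * f y := by
  linear_combination hf.mul_center_identity hμ hz₀ hτz x y -
    f y * hf.apply_mul_center_mul_center hμ hz₀ hτz ha hb x

theorem apply_mul (x y : S) : f z₀ * f (x * y) = f x * f (y * z₀) + f (x * z₀) * f y := by
  have h := hf.apply_mul_mul_center hμ hz₀ hτz ha hb (x * z₀) y
  rw [mul_assoc x z₀ y, hz₀ y, ← mul_assoc x y z₀] at h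
  have h' : f z₀ * (f z₀ * f (x * y) - f x * f (y * z₀) - f (x * z₀) * f y) = 0 := by
    linear_combination -h + f z₀ * hf.apply_mul_center_mul_center hμ hz₀ hτz ha hb (x * y) -
      f (y * z₀) * hf.apply_mul_center_mul_center hμ hz₀ hτz ha hb x
  linear_combination (mul_eq_zero.mp h').resolve_left ha

theorem twist_apply_mul_center (y : S) : μ y * f (τ y * z₀) = f (y * z₀) := by
  have h := hf.apply_center_mul_twist_apply_mul hμ hz₀ hτz z₀ y
  rw [hb] at h
  exact mul_left_cancel₀ ha (by linear_combination h)

end Normalized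

variable (hτinv : ∀ x, τ (τ x) = x) (hμτ : ∀ x, μ x * μ (τ x) = 1)
include hτinv hμτ

theorem eq_zero_of_forall_apply_mul_center_eq {l : ℂ} (hl : ∀ x, f (x * z₀) = l * f x) :
    f = 0 := by
  by_cases ha : f z₀ = 0
  · by_cases hl0 : l = 0
    · funext x
      have hx := hf x x
      rw [hl, hl, hl0] at hx
      exact mul_self_eq_zero.mp (by linear_combination -hx / 2)
    have hsine : ∀ x y, μ y * f (τ y * x) = f (x * y) + 2 / l * f x * f y := by
      intro x y
      have h := hf x y
      rw [hl, hl] at h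
      field_simp
      linear_combination h
    have hneg := twist_apply_eq_neg_of_twisted_sine hτinv hμτ (by simpa) hsine
    have hpos : ∀ y, μ y * f (τ y) = f y := by
      intro y
      have h := hf z₀ y
      rw [hz₀ y, hl, hl, hl, hl, ha] at h
      have h' : l ^ 2 * (μ y * f (τ y) - f y) = 0 := by linear_combination h
      exact sub_eq_zero.mp ((mul_eq_zero.mp h').resolve_left (pow_ne_zero 2 hl0))
    funext y
    simp only [Pi.zero_apply]
    linear_combination (hneg y - hpos y) / 2
  · refine hf.eq_zero_of_forall_apply_mul_eq_zero fun x y => ?_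
    have h := hf.apply_center_mul_twist_apply_mul hμ hz₀ hτz y (τ x)
    rw [hl, hl, hτinv] at h
    have h' : f z₀ * μ (τ x) * f (x * y) = 0 := by linear_combination h
    exact (mul_eq_zero.mp h').resolve_left (mul_ne_zero ha (right_ne_zero_of_mul_eq_one (hμτ x)))

variable (hne : f ≠ 0)
include hne

theorem apply_center_ne_zero : f z₀ ≠ 0 := by
  intro ha
  obtain ⟨u, hu : f u ≠ 0⟩ := Function.ne_iff.mp hne
  refine hne (hf.eq_zero_of_forall_apply_mul_center_eq hμ hz₀ hτz hτinv hμτ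
    (l := f (u * z₀) / f u) fun x => ?_)
  have h := hf.apply_center_mul_twist_apply_mul hμ hz₀ hτz x u
  rw [ha] at h
  field_simp
  linear_combination h

theorem apply_center_mul_center : f (z₀ * z₀) = 0 := by
  have ha := hf.apply_center_ne_zero hμ hz₀ hτz hτinv hμτ hne
  have hN := hf.mul_center_identity hμ hz₀ hτz
  by_contra hb
  refine hne (hf.eq_zero_of_forall_apply_mul_center_eq hμ hz₀ hτz hτinv hμτ
    (l := f (z₀ * z₀) / f z₀) fun y => ?_)
  have h₁ := hN y z₀
  have h₂ := hN z₀ y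
  rw [hz₀ y] at h₂
  have h : f (z₀ * z₀) * (f z₀ * f (y * z₀) - f (z₀ * z₀) * f y) = 0 := by
    linear_combination f z₀ * h₁ - 2 * f z₀ * h₂ + f y * hN z₀ z₀
  have h' := (mul_eq_zero.mp h).resolve_left hb
  field_simp
  linear_combination h'

theorem twist_apply (y : S) : μ y * f (τ y) = -f y := by
  have ha := hf.apply_center_ne_zero hμ hz₀ hτz hτinv hμτ hne
  have hb := hf.apply_center_mul_center hμ hz₀ hτz hτinv hμτ hne
  obtain ⟨u, hu : f u ≠ 0⟩ := Function.ne_iff.mp hne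
  have hw : f (u * z₀ * z₀) ≠ 0 := by
    rw [hf.apply_mul_center_mul_center hμ hz₀ hτz ha hb u]
    exact neg_ne_zero.mpr (mul_ne_zero ha hu)
  have hV := hf.twist_apply_mul_center hμ hz₀ hτz ha hb (τ y)
  rw [hτinv] at hV
  have h : f (u * z₀ * z₀) * (f (τ y) + μ (τ y) * f y) = 0 := by
    linear_combination μ (τ y) * hf.apply_center_mul_twist_apply_mul hμ hz₀ hτz (u * z₀) y -
      f z₀ * f (τ y * (u * z₀)) * hμτ y - hf.apply_mul hμ hz₀ hτz ha hb (τ y) (u * z₀) +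
      f (u * z₀) * hV
  linear_combination μ y * (mul_eq_zero.mp h).resolve_left hw - f y * hμτ y

theorem exists_mul_char : ∃ χ : S → ℂ, (∀ x y, χ (x * y) = χ x * χ y) ∧ χ z₀ ≠ 0 ∧
    μ z₀ * χ (τ z₀) = -χ z₀ ∧ ∀ x, f x = χ z₀ * (μ x * χ (τ x) - χ x) / 2 := by
  have ha := hf.apply_center_ne_zero hμ hz₀ hτz hτinv hμτ hne
  have hb := hf.apply_center_mul_center hμ hz₀ hτz hτinv hμτ hne
  have hτf := hf.twist_apply hμ hz₀ hτz hτinv hμτ hne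
  have hτfz := hf.twist_apply_mul_center hμ hz₀ hτz ha hb
  obtain ⟨c, hc⟩ : ∃ c : ℂ, c ^ 2 = -f z₀ := IsAlgClosed.exists_pow_nat_eq _ two_pos
  have hc0 : c ≠ 0 := by rintro rfl; exact ha (by linear_combination hc)
  -- `χ = g + c f / f z₀` with `g = f (· * z₀) / f z₀`; its partner `μ · χ ∘ τ` is `g - c f / f z₀`.
  have hχz : (f (z₀ * z₀) + c * f z₀) / f z₀ = c := by rw [hb]; field_simp; ring
  refine ⟨fun x => (f (x * z₀) + c * f x) / f z₀, fun x y => ?_, ?_, ?_, fun x => ?_⟩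
  · rw [div_mul_div_comm, div_eq_div_iff ha (mul_ne_zero ha ha)]
    linear_combination f z₀ * hf.apply_mul_mul_center hμ hz₀ hτz ha hb x y +
      f z₀ * c * hf.apply_mul hμ hz₀ hτz ha hb x y - f z₀ * f x * f y * hc
  · simpa only [hχz] using hc0
  · simp only [hχz]
    field_simp
    linear_combination hτfz z₀ + hb + c * hτf z₀
  · simp only [hχz]
    field_simp
    linear_combination 2 * f x * hc - c * hτfz x - c ^ 2 * hτf x

end IsVanVleckSolution

theorem IsVanVleckSolution.of_mul {S : Type*} [Semigroup S] {τ : S → S} {μ : S → ℂ} {z₀ : S}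
    {χ ψ : S → ℂ} (hχ : ∀ x y, χ (x * y) = χ x * χ y) (hψ : ∀ x y, ψ (x * y) = ψ x * ψ y)
    (hχψ : ∀ y, μ y * χ (τ y) = ψ y) (hψχ : ∀ y, μ y * ψ (τ y) = χ y) (hz : ψ z₀ = -χ z₀) :
    IsVanVleckSolution τ μ z₀ fun x => χ z₀ * (ψ x - χ x) / 2 := by
  intro x y
  simp only [hχ, hψ]
  linear_combination (χ z₀ / 2 * ψ x * ψ z₀) * hψχ y - (χ z₀ ^ 2 / 2 * χ x) * hχψ y +
    (χ z₀ / 2 * ψ x * (χ y - ψ y)) * hz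

theorem stmt_19 {S : Type*} [Semigroup S] (τ : S → S)
    (hτinv : ∀ x, τ (τ x) = x)
    (hτ : (∀ x y, τ (x * y) = τ x * τ y) ∨ (∀ x y, τ (x * y) = τ y * τ x))
    (μ : S → ℂ) (hμ : ∀ x y, μ (x * y) = μ x * μ y)
    (hμτ : ∀ x, μ (x * τ x) = 1)
    (z₀ : S) (hz₀ : ∀ x, z₀ * x = x * z₀)
    (f : S → ℂ) :
    (f ≠ 0 ∧ ∀ x y, μ y * f (τ y * x * z₀) - f (x * y * z₀) = 2 * f x * f y) ↔
    ∃ χ : S → ℂ, (∀ x y, χ (x * y) = χ x * χ y) ∧ χ z₀ ≠ 0 ∧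
      μ z₀ * χ (τ z₀) = -χ z₀ ∧
      ∀ x, f x = χ z₀ * (μ x * χ (τ x) - χ x) / 2 := by
  have hμτ' : ∀ x, μ x * μ (τ x) = 1 := fun x => hμ x (τ x) ▸ hμτ x
  constructor
  · rintro ⟨hne, hf⟩
    exact IsVanVleckSolution.exists_mul_char hf hμ hz₀ (map_mul_central_eq hτ hz₀) hτinv hμτ' hne
  · rintro ⟨χ, hχ, hχz₀, hχτz₀, hfχ⟩
    rw [funext hfχ]
    refine ⟨fun h => hχz₀ ?_, IsVanVleckSolution.of_mul (ψ := fun x => μ x * χ (τ x)) hχ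
      (fun x y => ?_) (fun _ => rfl) (fun y => ?_) hχτz₀⟩
    · have h0 := congrFun h z₀
      simp only [hχτz₀, Pi.zero_apply] at h0
      exact mul_self_eq_zero.mp (by linear_combination -h0)
    · rw [hμ, map_mul_comp_of_hom_or_anti hτ hχ]
      ring
    · rw [hτinv, ← mul_assoc, hμτ', one_mul]
end
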